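/- arXiv:1703.07120 — 9 statements merged into one kernel-verified Lean document; each statement's English description precedes it below -/
import Mathlib

section
/- For every μ ≥ 0 such that P̂(μ) is invertible, the smoother iteration matrix satisfies the exact identity T_S(μ) − E ⊗ H = μ · P̂(μ)^{-1} · ( I_L ⊗ (Q − Q_Δ) ⊗ A + E ⊗ (Q_Δ N_M) ⊗ A ). In particular T_S(0) = E ⊗ H. -/
/-!
STATEMENT 0: For every μ ≥ 0 such that P̂(μ) is invertible, the smoother iteration
matrix satisfies T_S(μ) − E ⊗ H = μ · P̂(μ)⁻¹ · (I_L ⊗ (Q − Q_Δ) ⊗ A + E ⊗ (Q_Δ N_M) ⊗ A).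
In particular T_S(0) = E ⊗ H.
-/

noncomputable section

open Matrix
open scoped Kronecker

/-- Complexification of a real matrix. -/
def cmplx {m n : Type*} (A : Matrix m n ℝ) : Matrix m n ℂ := A.map (fun x => (x : ℂ))

/-- The matrix `E` with ones on the first subdiagonal and zeros elsewhere. -/
def Emat (L : ℕ) : Matrix (Fin L) (Fin L) ℂ :=
  Matrix.of fun i j => if (i : ℕ) = (j : ℕ) + 1 then 1 else 0

/-- The matrix `N_M` whose last column consists of ones, all other entries zero. -/
def Nmat (M : ℕ) : Matrix (Fin M) (Fin M) ℂ :=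
  Matrix.of fun _ j => if (j : ℕ) = M - 1 then 1 else 0

/-- `H = N_M ⊗ I_N`. -/
def Hmat (M N : ℕ) : Matrix (Fin M × Fin N) (Fin M × Fin N) ℂ :=
  Nmat M ⊗ₖ (1 : Matrix (Fin N) (Fin N) ℂ)

/-- `E ⊗ H`. -/
def EH (L M N : ℕ) : Matrix (Fin L × Fin M × Fin N) (Fin L × Fin M × Fin N) ℂ :=
  Emat L ⊗ₖ Hmat M N

/-- The composite collocation matrix `C(μ) = I − μ (I_L ⊗ Q ⊗ A) − E ⊗ H`. -/
def Cmat (L : ℕ) {M N : ℕ} (Q : Matrix (Fin M) (Fin M) ℝ) (A : Matrix (Fin N) (Fin N) ℂ)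
    (μ : ℝ) : Matrix (Fin L × Fin M × Fin N) (Fin L × Fin M × Fin N) ℂ :=
  1 - (μ : ℂ) • ((1 : Matrix (Fin L) (Fin L) ℂ) ⊗ₖ (cmplx Q ⊗ₖ A)) - EH L M N

/-- The approximative block Jacobi preconditioner `P̂(μ) = I − μ (I_L ⊗ Q_Δ ⊗ A)`. -/
def Phat (L : ℕ) {M N : ℕ} (QΔ : Matrix (Fin M) (Fin M) ℝ) (A : Matrix (Fin N) (Fin N) ℂ)
    (μ : ℝ) : Matrix (Fin L × Fin M × Fin N) (Fin L × Fin M × Fin N) ℂ :=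
  1 - (μ : ℂ) • ((1 : Matrix (Fin L) (Fin L) ℂ) ⊗ₖ (cmplx QΔ ⊗ₖ A))

/-- The smoother iteration matrix `T_S(μ) = I − P̂(μ)⁻¹ C(μ)`. -/
def Tsmooth (L : ℕ) {M N : ℕ} (Q QΔ : Matrix (Fin M) (Fin M) ℝ)
    (A : Matrix (Fin N) (Fin N) ℂ) (μ : ℝ) :
    Matrix (Fin L × Fin M × Fin N) (Fin L × Fin M × Fin N) ℂ :=
  1 - (Phat L QΔ A μ)⁻¹ * Cmat L Q A μ

theorem stmt_0 (L M N : ℕ) (hL : 0 < L) (hM : 0 < M) (hN : 0 < N)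
    (Q QΔ : Matrix (Fin M) (Fin M) ℝ) (A : Matrix (Fin N) (Fin N) ℂ)
    (μ : ℝ) (hμ : 0 ≤ μ) (hP : IsUnit (Phat L QΔ A μ)) :
    Tsmooth L Q QΔ A μ - EH L M N =
      (μ : ℂ) • ((Phat L QΔ A μ)⁻¹ *
        ((1 : Matrix (Fin L) (Fin L) ℂ) ⊗ₖ (cmplx (Q - QΔ) ⊗ₖ A)
          + Emat L ⊗ₖ ((cmplx QΔ * Nmat M) ⊗ₖ A)))
      ∧ Tsmooth L Q QΔ A 0 = EH L M N := by
  have key : ((1 : Matrix (Fin L) (Fin L) ℂ) ⊗ₖ (cmplx QΔ ⊗ₖ A)) * EH L M N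
      = Emat L ⊗ₖ ((cmplx QΔ * Nmat M) ⊗ₖ A) := by
    unfold EH Hmat
    rw [← Matrix.mul_kronecker_mul, ← Matrix.mul_kronecker_mul, Matrix.one_mul, Matrix.mul_one]
  have hsub : cmplx (Q - QΔ) = cmplx Q - cmplx QΔ := by
    ext i j; simp [cmplx, Matrix.sub_apply]
  constructor
  · have hinv : (Phat L QΔ A μ)⁻¹ * Phat L QΔ A μ = 1 :=
      Matrix.nonsing_inv_mul _ ((Matrix.isUnit_iff_isUnit_det _).mp hP)
    have hmain : Phat L QΔ A μ - Cmat L Q A μ - Phat L QΔ A μ * EH L M N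
        = (μ : ℂ) • (((1 : Matrix (Fin L) (Fin L) ℂ) ⊗ₖ (cmplx (Q - QΔ) ⊗ₖ A)
          + Emat L ⊗ₖ ((cmplx QΔ * Nmat M) ⊗ₖ A))) := by
      unfold Phat Cmat
      have h2 : (cmplx Q - cmplx QΔ) ⊗ₖ A = cmplx Q ⊗ₖ A - cmplx QΔ ⊗ₖ A := by
        ext i j; simp [Matrix.kroneckerMap_apply, Matrix.sub_apply, sub_mul]
      have h3 : (1 : Matrix (Fin L) (Fin L) ℂ) ⊗ₖ (cmplx Q ⊗ₖ A - cmplx QΔ ⊗ₖ A)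
          = (1 : Matrix (Fin L) (Fin L) ℂ) ⊗ₖ (cmplx Q ⊗ₖ A)
            - (1 : Matrix (Fin L) (Fin L) ℂ) ⊗ₖ (cmplx QΔ ⊗ₖ A) := by
        ext i j; simp [Matrix.kroneckerMap_apply, Matrix.sub_apply, mul_sub]
      rw [Matrix.sub_mul, Matrix.one_mul, Matrix.smul_mul, key, hsub, h2, h3,
        smul_add, smul_sub]
      abel
    calc Tsmooth L Q QΔ A μ - EH L M N
        = (Phat L QΔ A μ)⁻¹ * (Phat L QΔ A μ - Cmat L Q A μ - Phat L QΔ A μ * EH L M N) := by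
          rw [Tsmooth, Matrix.mul_sub, Matrix.mul_sub, hinv, ← Matrix.mul_assoc, hinv,
            Matrix.one_mul]
      _ = (μ : ℂ) • ((Phat L QΔ A μ)⁻¹ *
          ((1 : Matrix (Fin L) (Fin L) ℂ) ⊗ₖ (cmplx (Q - QΔ) ⊗ₖ A)
            + Emat L ⊗ₖ ((cmplx QΔ * Nmat M) ⊗ₖ A))) := by
          rw [hmain, Matrix.mul_smul]
  · simp [Tsmooth, Phat, Cmat]
end
end

section
/- There exist constants c > 0 and μ* > 0 such that for all μ with 0 ≤ μ ≤ μ*, the preconditioner P̂(μ) is invertible and ‖T_S(μ) − E ⊗ H‖ ≤ c · μ. -/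
set_option maxHeartbeats 1000000
set_option synthInstance.maxHeartbeats 400000


/-!
STATEMENT 1: There exist constants c > 0 and μ* > 0 such that for all μ with
0 ≤ μ ≤ μ*, the preconditioner P̂(μ) is invertible and ‖T_S(μ) − E ⊗ H‖ ≤ c · μ.
-/

noncomputable section

open Matrix
open scoped Kronecker

/-- The operator norm induced by the Euclidean vector norm. -/
def opNorm {n : Type*} [Fintype n] [DecidableEq n] (A : Matrix n n ℂ) : ℝ :=
  ‖Matrix.toEuclideanCLM (𝕜 := ℂ) A‖

theorem stmt_1 (L M N : ℕ) (hL : 0 < L) (hM : 0 < M) (hN : 0 < N)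
    (Q QΔ : Matrix (Fin M) (Fin M) ℝ) (A : Matrix (Fin N) (Fin N) ℂ) :
    ∃ c > (0 : ℝ), ∃ μs > (0 : ℝ), ∀ μ : ℝ, 0 ≤ μ → μ ≤ μs →
      IsUnit (Phat L QΔ A μ) ∧
      opNorm (Tsmooth L Q QΔ A μ - EH L M N) ≤ c * μ := by
  classical
  set f := Matrix.toEuclideanCLM (𝕜 := ℂ) (n := Fin L × Fin M × Fin N) with hf
  set B := (1 : Matrix (Fin L) (Fin L) ℂ) ⊗ₖ (cmplx QΔ ⊗ₖ A) with hB
  set G := (1 : Matrix (Fin L) (Fin L) ℂ) ⊗ₖ (cmplx Q ⊗ₖ A) with hG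
  set K := EH L M N with hK
  refine ⟨2 * (‖f (G - B)‖ + ‖f B‖ * ‖f K‖) + 1, by positivity,
    (2 * (‖f B‖ + 1))⁻¹, by positivity, ?_⟩
  intro μ hμ0 hμs
  have hμn : ‖(↑μ : ℂ)‖ = μ := by
    rw [Complex.norm_real, Real.norm_eq_abs, abs_of_nonneg hμ0]
  have hxn : ‖f ((μ : ℂ) • B)‖ ≤ μ * ‖f B‖ := by
    rw [_root_.map_smul]
    exact (ContinuousLinearMap.opNorm_smul_le (↑μ : ℂ) (f B)).trans_eq (by rw [hμn])
  have hxhalf : ‖f ((μ : ℂ) • B)‖ ≤ 1 / 2 := by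
    refine hxn.trans ?_
    have h1 : μ * ‖f B‖ ≤ (2 * (‖f B‖ + 1))⁻¹ * ‖f B‖ :=
      mul_le_mul_of_nonneg_right hμs (norm_nonneg _)
    have h2 : (2 * (‖f B‖ + 1))⁻¹ * ‖f B‖ ≤ 1 / 2 := by
      rw [inv_mul_le_iff₀ (by positivity)]
      nlinarith [norm_nonneg (f B)]
    linarith
  have hxlt : ‖f ((μ : ℂ) • B)‖ < 1 := by linarith
  set x := f ((μ : ℂ) • B) with hx
  have hfP : f (Phat L QΔ A μ) = 1 - x := by
    rw [show Phat L QΔ A μ = 1 - (μ : ℂ) • B from rfl, _root_.map_sub, _root_.map_one]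
  -- invertibility
  have hUc : IsUnit (f (Phat L QΔ A μ)) := by
    rw [hfP]; exact (Units.oneSub x hxlt).isUnit
  have hUP : IsUnit (Phat L QΔ A μ) := by
    have h := hUc.map (Matrix.toEuclideanCLM (𝕜 := ℂ)
      (n := Fin L × Fin M × Fin N)).symm.toRingEquiv.toRingHom
    simpa using h
  have hdet : IsUnit (Phat L QΔ A μ).det :=
    (Matrix.isUnit_iff_isUnit_det _).mp hUP
  have hPinvP : (Phat L QΔ A μ)⁻¹ * Phat L QΔ A μ = 1 :=
    Matrix.nonsing_inv_mul _ hdet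
  have hPPinv : Phat L QΔ A μ * (Phat L QΔ A μ)⁻¹ = 1 :=
    Matrix.mul_nonsing_inv _ hdet
  refine ⟨hUP, ?_⟩
  -- the key algebraic identity
  have h1 : Phat L QΔ A μ * (Tsmooth L Q QΔ A μ - K) =
      (μ : ℂ) • ((G - B) + B * K) := by
    have hC : Cmat L Q A μ = 1 - (μ : ℂ) • G - K := rfl
    have hP : Phat L QΔ A μ = 1 - (μ : ℂ) • B := rfl
    rw [Tsmooth, mul_sub, mul_sub, mul_one, ← mul_assoc, hPPinv, one_mul, hC, hP,
      sub_mul, one_mul, Matrix.smul_mul]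
    module
  have hid : Tsmooth L Q QΔ A μ - K =
      (μ : ℂ) • ((Phat L QΔ A μ)⁻¹ * ((G - B) + B * K)) := by
    calc Tsmooth L Q QΔ A μ - K
        = ((Phat L QΔ A μ)⁻¹ * Phat L QΔ A μ) * (Tsmooth L Q QΔ A μ - K) := by
          rw [hPinvP, one_mul]
      _ = (Phat L QΔ A μ)⁻¹ * (Phat L QΔ A μ * (Tsmooth L Q QΔ A μ - K)) := by
          rw [mul_assoc]
      _ = (Phat L QΔ A μ)⁻¹ * ((μ : ℂ) • ((G - B) + B * K)) := by rw [h1]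
      _ = (μ : ℂ) • ((Phat L QΔ A μ)⁻¹ * ((G - B) + B * K)) := by
          rw [Matrix.mul_smul]
  -- bound on the inverse
  set Z := f ((Phat L QΔ A μ)⁻¹) with hZ
  have hZ1 : Z * (1 - x) = 1 := by
    rw [hZ, ← hfP, ← _root_.map_mul, hPinvP, _root_.map_one]
  have hZeq : Z = 1 + Z * x := by
    have h : Z - Z * x = 1 := by rw [← mul_one_sub]; exact hZ1
    exact eq_add_of_sub_eq h
  have hZnorm : ‖Z‖ ≤ 2 := by
    have h2 : ‖Z‖ ≤ 1 + ‖Z‖ * ‖x‖ := by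
      have hone : ‖(1 : EuclideanSpace ℂ (Fin L × Fin M × Fin N) →L[ℂ]
          EuclideanSpace ℂ (Fin L × Fin M × Fin N))‖ ≤ 1 := by
        rw [ContinuousLinearMap.one_def]; exact ContinuousLinearMap.norm_id_le
      have ha : ‖Z‖ ≤ ‖(1 : EuclideanSpace ℂ (Fin L × Fin M × Fin N) →L[ℂ]
          EuclideanSpace ℂ (Fin L × Fin M × Fin N))‖ + ‖Z * x‖ := by
        conv_lhs => rw [hZeq]
        exact norm_add_le _ _
      have hm := norm_mul_le Z x
      linarith
    have hzx : ‖Z‖ * ‖x‖ ≤ ‖Z‖ * (1 / 2) :=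
      mul_le_mul_of_nonneg_left hxhalf (norm_nonneg _)
    have h0 := norm_nonneg Z
    linarith
  -- finish
  have hWb : ‖f ((G - B) + B * K)‖ ≤ ‖f (G - B)‖ + ‖f B‖ * ‖f K‖ := by
    rw [_root_.map_add, _root_.map_mul]
    refine (norm_add_le _ _).trans ?_
    have hm := norm_mul_le (f B) (f K)
    linarith
  calc opNorm (Tsmooth L Q QΔ A μ - K)
      = ‖f (Tsmooth L Q QΔ A μ - K)‖ := rfl
    _ = ‖(↑μ : ℂ) • (Z * f ((G - B) + B * K))‖ := by
        rw [hid, _root_.map_smul, _root_.map_mul]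
    _ ≤ ‖(↑μ : ℂ)‖ * ‖Z * f ((G - B) + B * K)‖ :=
        ContinuousLinearMap.opNorm_smul_le _ _
    _ = μ * ‖Z * f ((G - B) + B * K)‖ := by rw [hμn]
    _ ≤ μ * (2 * (‖f (G - B)‖ + ‖f B‖ * ‖f K‖) + 1) := by
        refine mul_le_mul_of_nonneg_left ?_ hμ0
        have hm := norm_mul_le Z (f ((G - B) + B * K))
        have hq : ‖Z‖ * ‖f ((G - B) + B * K)‖ ≤
            2 * (‖f (G - B)‖ + ‖f B‖ * ‖f K‖) :=
          mul_le_mul hZnorm hWb (norm_nonneg _) (by norm_num)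
        linarith
    _ = (2 * (‖f (G - B)‖ + ‖f B‖ * ‖f K‖) + 1) * μ := mul_comm _ _
end
end

section
/- (Convergence of the smoother in the non-stiff limit.) There exist constants c > 0 and μ* > 0 such that for all μ with 0 < μ < μ*, the preconditioner P̂(μ) is invertible and the spectral radius of the smoother iteration matrix satisfies ρ(T_S(μ)) ≤ c · μ^{1/L}. In particular ρ(T_S(μ)) < 1 for μ small enough. -/
/-!
STATEMENT 2 (Convergence of the smoother in the non-stiff limit): There exist
constants c > 0 and μ* > 0 such that for all 0 < μ < μ*, P̂(μ) is invertible and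
ρ(T_S(μ)) ≤ c · μ^(1/L). In particular ρ(T_S(μ)) < 1 for μ small enough.
-/

noncomputable section

open Matrix
open scoped Kronecker

/-!
Write `P̂ = 1 - μY`, `C = 1 - μX - Z` with `X = I ⊗ Q ⊗ A`, `Y = I ⊗ Q_Δ ⊗ A`, `Z = E ⊗ H`.
For small `μ` the Neumann series bounds `‖P̂⁻¹‖ ≤ 2`, and `T_S - Z = μ P̂⁻¹ (X - Y + Y Z)`, so
`T_S = Z + O(μ)`. Since `E` is nilpotent, `Z ^ L = 0`, hence `‖T_S ^ L‖ = ‖T_S ^ L - Z ^ L‖ = O(μ)`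
and Gelfand's bound `ρ(T) ≤ ‖T ^ L‖ ^ (1 / L)` gives `ρ(T_S) = O(μ ^ (1 / L))`.
-/

open scoped ENNReal

section NormedRing

variable {A : Type*} [NormedRing A]

theorem norm_pow_succ_sub_pow_succ_le {a b : A} {B : ℝ} (ha : ‖a‖ ≤ B) (hb : ‖b‖ ≤ B)
    (n : ℕ) :
    ‖a ^ (n + 1) - b ^ (n + 1)‖ ≤ (n + 1) * B ^ n * ‖a - b‖ := by
  induction n with
  | zero => simp
  | succ n ih =>
    have hB : 0 ≤ B := (norm_nonneg a).trans ha
    have hpow : ‖a ^ (n + 1)‖ ≤ B ^ (n + 1) :=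
      (norm_pow_le' a n.succ_pos).trans (pow_le_pow_left₀ (norm_nonneg a) ha _)
    calc ‖a ^ (n + 2) - b ^ (n + 2)‖
        = ‖a ^ (n + 1) * (a - b) + (a ^ (n + 1) - b ^ (n + 1)) * b‖ := by congr 1; noncomm_ring
      _ ≤ ‖a ^ (n + 1)‖ * ‖a - b‖ + ‖a ^ (n + 1) - b ^ (n + 1)‖ * ‖b‖ :=
          (norm_add_le _ _).trans (add_le_add (norm_mul_le _ _) (norm_mul_le _ _))
      _ ≤ B ^ (n + 1) * ‖a - b‖ + ((n + 1) * B ^ n * ‖a - b‖) * B := by gcongr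
      _ = ((n + 1 : ℕ) + 1) * B ^ (n + 1) * ‖a - b‖ := by push_cast; ring

theorem norm_pow_le_of_norm_sub_le_of_pow_eq_zero {a z : A} {B ε : ℝ} {n : ℕ} (hn : 0 < n)
    (ha : ‖a‖ ≤ B) (hz : ‖z‖ ≤ B) (haz : ‖a - z‖ ≤ ε) (hzn : z ^ n = 0) :
    ‖a ^ n‖ ≤ n * B ^ (n - 1) * ε := by
  obtain ⟨m, rfl⟩ : ∃ m, n = m + 1 := ⟨n - 1, by omega⟩
  have hB : 0 ≤ B := (norm_nonneg a).trans ha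
  calc ‖a ^ (m + 1)‖ = ‖a ^ (m + 1) - z ^ (m + 1)‖ := by rw [hzn, sub_zero]
    _ ≤ (m + 1) * B ^ m * ‖a - z‖ := norm_pow_succ_sub_pow_succ_le ha hz m
    _ ≤ ((m + 1 : ℕ) : ℝ) * B ^ (m + 1 - 1) * ε := by
        rw [add_tsub_cancel_right]; push_cast; gcongr

theorem norm_inverse_one_sub_le_two [HasSummableGeomSeries A] (hone : ‖(1 : A)‖ ≤ 1) {y : A}
    (hy : ‖y‖ ≤ 1 / 2) : ‖Ring.inverse (1 - y)‖ ≤ 2 := by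
  have hy1 : ‖y‖ < 1 := hy.trans_lt (by norm_num)
  rw [← geom_series_eq_inverse y hy1]
  refine (tsum_geometric_le_of_norm_lt_one y hy1).trans ?_
  have : (1 - ‖y‖)⁻¹ ≤ 2 := by
    rw [inv_le_comm₀ (by linarith) two_pos]; linarith
  linarith

end NormedRing

theorem one_sub_mul_sub_sub_eq_smul {𝕜 R : Type*} [CommSemiring 𝕜] [Ring R] [Algebra 𝕜 R]
    (t : 𝕜) (X Y Z u : R) (hu : u * (1 - t • Y) = 1) :
    1 - u * (1 - t • X - Z) - Z = t • (u * (X - Y + Y * Z)) := by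
  have key : 1 - u * (1 - t • X - Z) - Z
      = t • (u * (X - Y + Y * Z)) + (1 - u * (1 - t • Y)) * (1 - Z) := by
    simp only [mul_sub, sub_mul, mul_add, mul_one, one_mul, mul_smul_comm, smul_mul_assoc,
      smul_sub, smul_add, mul_assoc]
    abel
  rw [key, hu, sub_self, zero_mul, add_zero]

section BanachAlgebra

variable {A : Type*} [NormedRing A] [NormedAlgebra ℂ A] [CompleteSpace A]

theorem spectralRadius_le_ofReal_norm_pow_rpow (hone : ‖(1 : A)‖ ≤ 1) (a : A) {n : ℕ}
    (hn : 0 < n) : spectralRadius ℂ a ≤ ENNReal.ofReal (‖a ^ n‖ ^ (1 / (n : ℝ))) := by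
  obtain ⟨m, rfl⟩ : ∃ m, n = m + 1 := ⟨n - 1, by omega⟩
  have hone' : (‖(1 : A)‖₊ : ℝ≥0∞) ^ (1 / (m + 1) : ℝ) ≤ 1 :=
    ENNReal.rpow_le_one (by exact_mod_cast hone) (by positivity)
  calc spectralRadius ℂ a
      ≤ (‖a ^ (m + 1)‖₊ : ℝ≥0∞) ^ (1 / (m + 1) : ℝ) *
          (‖(1 : A)‖₊ : ℝ≥0∞) ^ (1 / (m + 1) : ℝ) :=
        spectrum.spectralRadius_le_pow_nnnorm_pow_one_div ℂ a m
    _ ≤ (‖a ^ (m + 1)‖₊ : ℝ≥0∞) ^ (1 / (m + 1) : ℝ) := mul_le_of_le_one_right' hone'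
    _ = ENNReal.ofReal (‖a ^ (m + 1)‖ ^ (1 / ((m + 1 : ℕ) : ℝ))) := by
        rw [← ENNReal.ofReal_rpow_of_nonneg (norm_nonneg _) (by positivity), ofReal_norm]
        push_cast; rfl

theorem exists_spectralRadius_one_sub_inverse_mul_le (hone : ‖(1 : A)‖ ≤ 1) (X Y Z : A)
    {n : ℕ} (hn : 0 < n) (hZ : Z ^ n = 0) :
    ∃ c > (0 : ℝ), ∃ μs > (0 : ℝ), ∀ μ : ℝ, 0 < μ → μ < μs →
      IsUnit (1 - (μ : ℂ) • Y) ∧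
      spectralRadius ℂ (1 - Ring.inverse (1 - (μ : ℂ) • Y) * (1 - (μ : ℂ) • X - Z)) ≤
        ENNReal.ofReal (c * μ ^ ((1 : ℝ) / n)) := by
  set K := ‖X - Y + Y * Z‖ + 1
  set B := ‖Z‖ + 2 * K
  have hK : 0 < K := by positivity
  have hB : 0 < B := by positivity
  refine ⟨(n * B ^ (n - 1) * (2 * K)) ^ ((1 : ℝ) / n), by positivity,
    min 1 (1 / (2 * (‖Y‖ + 1))), by positivity, fun μ hμ hμs => ?_⟩
  have hμ1 : μ ≤ 1 := hμs.le.trans (min_le_left _ _)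
  have hμabs : ‖(μ : ℂ)‖ = μ := by rw [Complex.norm_real, Real.norm_of_nonneg hμ.le]
  have hμY : ‖(μ : ℂ) • Y‖ ≤ 1 / 2 := by
    have h := hμs.trans_le (min_le_right _ _)
    rw [lt_div_iff₀ (by positivity)] at h
    rw [norm_smul, hμabs]
    nlinarith [norm_nonneg Y]
  have hunit : IsUnit (1 - (μ : ℂ) • Y) :=
    isUnit_one_sub_of_norm_lt_one (hμY.trans_lt (by norm_num))
  set u := Ring.inverse (1 - (μ : ℂ) • Y)
  set T := 1 - u * (1 - (μ : ℂ) • X - Z)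
  have hTZ : ‖T - Z‖ ≤ μ * (2 * K) := by
    rw [one_sub_mul_sub_sub_eq_smul _ X Y Z u (Ring.inverse_mul_cancel _ hunit), norm_smul, hμabs]
    gcongr
    exact (norm_mul_le _ _).trans
      (mul_le_mul (norm_inverse_one_sub_le_two hone hμY) (by simp [K]) (norm_nonneg _) zero_le_two)
  have hT : ‖T‖ ≤ B := by
    have : μ * (2 * K) ≤ 2 * K := by nlinarith
    linarith [norm_le_insert' T Z]
  refine ⟨hunit, (spectralRadius_le_ofReal_norm_pow_rpow hone T hn).trans
    (ENNReal.ofReal_le_ofReal ?_)⟩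
  calc ‖T ^ n‖ ^ ((1 : ℝ) / n)
      ≤ (n * B ^ (n - 1) * (μ * (2 * K))) ^ ((1 : ℝ) / n) :=
        Real.rpow_le_rpow (norm_nonneg _)
          (norm_pow_le_of_norm_sub_le_of_pow_eq_zero hn hT (by linarith) hTZ hZ) (by positivity)
    _ = (n * B ^ (n - 1) * (2 * K)) ^ ((1 : ℝ) / n) * μ ^ ((1 : ℝ) / n) := by
        rw [← Real.mul_rpow (by positivity) hμ.le]; ring_nf

end BanachAlgebra

theorem exists_pos_forall_mul_rpow_lt_one (c : ℝ) {p : ℝ} (hp : 0 < p) :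
    ∃ μ₀ > (0 : ℝ), ∀ μ : ℝ, 0 < μ → μ < μ₀ → c * μ ^ p < 1 := by
  have hcont : ContinuousAt (fun μ : ℝ => c * μ ^ p) 0 :=
    (Real.continuousAt_rpow_const 0 p (Or.inr hp.le)).const_mul c
  have hlt : ∀ᶠ μ in nhds 0, c * μ ^ p < 1 :=
    hcont.eventually (gt_mem_nhds (by simp [Real.zero_rpow hp.ne']))
  obtain ⟨ε, hε, h⟩ := Metric.eventually_nhds_iff.mp hlt
  exact ⟨ε, hε, fun μ hμ hμε => h (by rwa [Real.dist_0_eq_abs, abs_of_pos hμ])⟩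

section Matrix

open Matrix

attribute [local instance] Matrix.linftyOpNormedRing Matrix.linftyOpNormedAlgebra

theorem Matrix.linfty_opNorm_one_le {n α : Type*} [Fintype n] [DecidableEq n] [NormedRing α]
    [NormOneClass α] : ‖(1 : Matrix n n α)‖ ≤ 1 := by
  rw [← diagonal_one, linfty_opNorm_diagonal]
  exact pi_norm_le_iff_of_nonneg zero_le_one |>.mpr fun _ => norm_one.le

theorem Matrix.kronecker_pow {m n α : Type*} [Fintype m] [Fintype n] [DecidableEq m]
    [DecidableEq n] [CommSemiring α] (X : Matrix m m α) (Y : Matrix n n α) (k : ℕ) :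
    (X ⊗ₖ Y) ^ k = (X ^ k) ⊗ₖ (Y ^ k) := by
  induction k with
  | zero => simp
  | succ k ih => rw [pow_succ, pow_succ, pow_succ, ih, mul_kronecker_mul]

theorem Emat_pow_apply (L k : ℕ) (i j : Fin L) :
    (Emat L ^ k) i j = if (i : ℕ) = j + k then 1 else 0 := by
  induction k generalizing i j with
  | zero => simp [one_apply, Fin.ext_iff]
  | succ k ih =>
    rw [pow_succ, mul_apply]
    by_cases hj : (j : ℕ) + 1 < L
    · rw [Finset.sum_eq_single ⟨j + 1, hj⟩
        (fun b _ hb => by simp [Emat, Fin.ext_iff] at hb ⊢; simp [hb]) (by simp), ih]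
      simp [Emat, ← add_assoc, add_right_comm _ 1 k]
    · rw [if_neg (by omega), Finset.sum_eq_zero fun l _ => by simp [Emat]; omega]

theorem Emat_pow_self (L : ℕ) : Emat L ^ L = 0 := by
  ext i j
  rw [Emat_pow_apply, if_neg (by omega), Matrix.zero_apply]

theorem EH_pow_self (L M N : ℕ) : EH L M N ^ L = 0 := by
  rw [EH, kronecker_pow, Emat_pow_self, zero_kronecker]

theorem stmt_2_general (L M N : ℕ) (hL : 0 < L)
    (Q QΔ : Matrix (Fin M) (Fin M) ℝ) (A : Matrix (Fin N) (Fin N) ℂ) :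
    (∃ c > (0 : ℝ), ∃ μs > (0 : ℝ), ∀ μ : ℝ, 0 < μ → μ < μs →
      IsUnit (Phat L QΔ A μ) ∧
      spectralRadius ℂ (Tsmooth L Q QΔ A μ) ≤
        ENNReal.ofReal (c * μ ^ ((1 : ℝ) / (L : ℝ))))
    ∧ (∃ μ₀ > (0 : ℝ), ∀ μ : ℝ, 0 < μ → μ < μ₀ →
      IsUnit (Phat L QΔ A μ) ∧
      spectralRadius ℂ (Tsmooth L Q QΔ A μ) < 1) := by
  obtain ⟨c, hc, μs, hμs, hsmooth⟩ := exists_spectralRadius_one_sub_inverse_mul_le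
    linfty_opNorm_one_le (1 ⊗ₖ (cmplx Q ⊗ₖ A)) (1 ⊗ₖ (cmplx QΔ ⊗ₖ A)) (EH L M N) hL
    (EH_pow_self L M N)
  have hbound : ∀ μ : ℝ, 0 < μ → μ < μs → IsUnit (Phat L QΔ A μ) ∧
      spectralRadius ℂ (Tsmooth L Q QΔ A μ) ≤
        ENNReal.ofReal (c * μ ^ ((1 : ℝ) / (L : ℝ))) := by
    intro μ hμ hμlt
    rw [Tsmooth, nonsing_inv_eq_ringInverse]
    exact hsmooth μ hμ hμlt
  obtain ⟨μ₀, hμ₀, hsmall⟩ :=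
    exists_pos_forall_mul_rpow_lt_one c (by positivity : (0 : ℝ) < 1 / L)
  refine ⟨⟨c, hc, μs, hμs, hbound⟩, min μs μ₀, lt_min hμs hμ₀, fun μ hμ hμmin => ?_⟩
  obtain ⟨hunit, hρ⟩ := hbound μ hμ (hμmin.trans_le (min_le_left _ _))
  have hcμ := hsmall μ hμ (hμmin.trans_le (min_le_right _ _))
  exact ⟨hunit, hρ.trans_lt (ENNReal.ofReal_lt_one.mpr hcμ)⟩

theorem stmt_2 (L M N : ℕ) (hL : 0 < L) (hM : 0 < M) (hN : 0 < N)
    (Q QΔ : Matrix (Fin M) (Fin M) ℝ) (A : Matrix (Fin N) (Fin N) ℂ) :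
    (∃ c > (0 : ℝ), ∃ μs > (0 : ℝ), ∀ μ : ℝ, 0 < μ → μ < μs →
      IsUnit (Phat L QΔ A μ) ∧
      spectralRadius ℂ (Tsmooth L Q QΔ A μ) ≤
        ENNReal.ofReal (c * μ ^ ((1 : ℝ) / (L : ℝ))))
    ∧ (∃ μ₀ > (0 : ℝ), ∀ μ : ℝ, 0 < μ → μ < μ₀ →
      IsUnit (Phat L QΔ A μ) ∧
      spectralRadius ℂ (Tsmooth L Q QΔ A μ) < 1) :=
  stmt_2_general L M N hL Q QΔ A

end Matrix
end
end

section
/- If I_{LM̃Ñ} − E ⊗ H̃ and I_{LMN} − E ⊗ H are invertible (which holds since E ⊗ H̃ and E ⊗ H are nilpotent), then the coarse-grid correction iteration matrix at μ = 0 satisfies T_CGC(0) = I_{LMN} − T_C^F · (I_{LM̃Ñ} − E ⊗ H̃)^{-1} · T_F^C · (I_{LMN} − E ⊗ H) = I_{LMN} − T_C^F T_F^C. -/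
/-!
STATEMENT 4: If I − E ⊗ H̃ and I − E ⊗ H are invertible (which holds since E ⊗ H̃
and E ⊗ H are nilpotent), then the coarse-grid correction at μ = 0 satisfies
T_CGC(0) = I − T_C^F (I − E ⊗ H̃)⁻¹ T_F^C (I − E ⊗ H) = I − T_C^F T_F^C.
-/

noncomputable section

open Matrix
open scoped Kronecker

/-- Restriction operator `T_F^C = I_L ⊗ T_{F,Q}^C ⊗ T_{F,A}^C`. -/
def TFCmat (L : ℕ) {M N M' N' : ℕ} (TFQ : Matrix (Fin M') (Fin M) ℝ)
    (TFA : Matrix (Fin N') (Fin N) ℂ) :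
    Matrix (Fin L × Fin M' × Fin N') (Fin L × Fin M × Fin N) ℂ :=
  (1 : Matrix (Fin L) (Fin L) ℂ) ⊗ₖ (cmplx TFQ ⊗ₖ TFA)

/-- Interpolation operator `T_C^F = I_L ⊗ T_{C,Q}^F ⊗ T_{C,A}^F`. -/
def TCFmat (L : ℕ) {M N M' N' : ℕ} (TCQ : Matrix (Fin M) (Fin M') ℝ)
    (TCA : Matrix (Fin N) (Fin N') ℂ) :
    Matrix (Fin L × Fin M × Fin N) (Fin L × Fin M' × Fin N') ℂ :=
  (1 : Matrix (Fin L) (Fin L) ℂ) ⊗ₖ (cmplx TCQ ⊗ₖ TCA)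

/-- The coarse approximative block Gauss-Seidel preconditioner
`P̃(μ) = I − μ (I_L ⊗ Q̃_Δ ⊗ Ã) − E ⊗ H̃`. -/
def Ptilde (L : ℕ) {M' N' : ℕ} (QΔt : Matrix (Fin M') (Fin M') ℝ)
    (At : Matrix (Fin N') (Fin N') ℂ) (μ : ℝ) :
    Matrix (Fin L × Fin M' × Fin N') (Fin L × Fin M' × Fin N') ℂ :=
  1 - (μ : ℂ) • ((1 : Matrix (Fin L) (Fin L) ℂ) ⊗ₖ (cmplx QΔt ⊗ₖ At)) - EH L M' N'

/-- The coarse-grid correction iteration matrix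
`T_CGC(μ) = I − T_C^F P̃(μ)⁻¹ T_F^C C(μ)`. -/
def Tcgc (L : ℕ) {M N M' N' : ℕ} (Q : Matrix (Fin M) (Fin M) ℝ)
    (A : Matrix (Fin N) (Fin N) ℂ)
    (QΔt : Matrix (Fin M') (Fin M') ℝ) (At : Matrix (Fin N') (Fin N') ℂ)
    (TFQ : Matrix (Fin M') (Fin M) ℝ) (TFA : Matrix (Fin N') (Fin N) ℂ)
    (TCQ : Matrix (Fin M) (Fin M') ℝ) (TCA : Matrix (Fin N) (Fin N') ℂ) (μ : ℝ) :
    Matrix (Fin L × Fin M × Fin N) (Fin L × Fin M × Fin N) ℂ :=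
  1 - TCFmat L TCQ TCA * (Ptilde L QΔt At μ)⁻¹ * TFCmat L TFQ TFA * Cmat L Q A μ

theorem stmt_4 (L M N M' N' : ℕ) (hL : 0 < L) (hM : 0 < M) (hN : 0 < N)
    (hM' : 0 < M') (hN' : 0 < N')
    (TFQ : Matrix (Fin M') (Fin M) ℝ) (TFA : Matrix (Fin N') (Fin N) ℂ)
    (TCQ : Matrix (Fin M) (Fin M') ℝ) (TCA : Matrix (Fin N) (Fin N') ℂ)
    (hcompat : EH L M' N' * TFCmat L TFQ TFA = TFCmat L TFQ TFA * EH L M N)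
    (hinv1 : IsUnit ((1 : Matrix (Fin L × Fin M' × Fin N') (Fin L × Fin M' × Fin N') ℂ)
      - EH L M' N'))
    (hinv2 : IsUnit ((1 : Matrix (Fin L × Fin M × Fin N) (Fin L × Fin M × Fin N) ℂ)
      - EH L M N)) :
    (1 : Matrix (Fin L × Fin M × Fin N) (Fin L × Fin M × Fin N) ℂ)
        - TCFmat L TCQ TCA * ((1 : Matrix (Fin L × Fin M' × Fin N') (Fin L × Fin M' × Fin N') ℂ)
            - EH L M' N')⁻¹ * TFCmat L TFQ TFA
          * ((1 : Matrix (Fin L × Fin M × Fin N) (Fin L × Fin M × Fin N) ℂ) - EH L M N) =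
      (1 : Matrix (Fin L × Fin M × Fin N) (Fin L × Fin M × Fin N) ℂ)
        - TCFmat L TCQ TCA * TFCmat L TFQ TFA := by
  have hc : ((1 : Matrix (Fin L × Fin M' × Fin N') (Fin L × Fin M' × Fin N') ℂ)
      - EH L M' N') * TFCmat L TFQ TFA
      = TFCmat L TFQ TFA * ((1 : Matrix (Fin L × Fin M × Fin N) (Fin L × Fin M × Fin N) ℂ)
      - EH L M N) := by
    rw [Matrix.sub_mul, Matrix.mul_sub, Matrix.one_mul, Matrix.mul_one, hcompat]
  have key : ((1 : Matrix (Fin L × Fin M' × Fin N') (Fin L × Fin M' × Fin N') ℂ)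
      - EH L M' N')⁻¹ * (TFCmat L TFQ TFA
      * ((1 : Matrix (Fin L × Fin M × Fin N) (Fin L × Fin M × Fin N) ℂ) - EH L M N))
      = TFCmat L TFQ TFA := by
    rw [← hc, ← Matrix.mul_assoc,
      Matrix.nonsing_inv_mul _ ((Matrix.isUnit_iff_isUnit_det _).mp hinv1), Matrix.one_mul]
  rw [Matrix.mul_assoc, Matrix.mul_assoc, key]
end
end

section
/- For every μ ≥ 0 such that P̃(μ) and I_{LMN} − E ⊗ H are invertible, the coarse-grid correction satisfies the exact identity T_CGC(μ) − (I_{LMN} − T_C^F T_F^C) = μ · T_C^F · P̃(μ)^{-1} · ( I_L ⊗ ( T_{F,Q}^C Q ⊗ T_{F,A}^C A − Q̃_Δ T_{F,Q}^C ⊗ Ã T_{F,A}^C ) ). -/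
/-!
STATEMENT 5: For every μ ≥ 0 such that P̃(μ) and I − E ⊗ H are invertible,
T_CGC(μ) − (I − T_C^F T_F^C)
  = μ · T_C^F · P̃(μ)⁻¹ · ( I_L ⊗ ( T_{F,Q}^C Q ⊗ T_{F,A}^C A − Q̃_Δ T_{F,Q}^C ⊗ Ã T_{F,A}^C ) ).
-/

noncomputable section

open Matrix
open scoped Kronecker

lemma cmplx_mul {m n p : Type*} [Fintype n] (A : Matrix m n ℝ) (B : Matrix n p ℝ) :
    cmplx (A * B) = cmplx A * cmplx B := by
  ext i j
  simp [cmplx, Matrix.mul_apply]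

lemma kronecker_sub' {l m n p : Type*} (A : Matrix l m ℂ) (B C : Matrix n p ℂ) :
    A ⊗ₖ (B - C) = A ⊗ₖ B - A ⊗ₖ C := by
  ext ⟨i, j⟩ ⟨k, r⟩
  simp [Matrix.kroneckerMap_apply, mul_sub]

theorem stmt_5 (L M N M' N' : ℕ) (hL : 0 < L) (hM : 0 < M) (hN : 0 < N)
    (hM' : 0 < M') (hN' : 0 < N')
    (Q : Matrix (Fin M) (Fin M) ℝ) (A : Matrix (Fin N) (Fin N) ℂ)
    (QΔt : Matrix (Fin M') (Fin M') ℝ) (At : Matrix (Fin N') (Fin N') ℂ)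
    (TFQ : Matrix (Fin M') (Fin M) ℝ) (TFA : Matrix (Fin N') (Fin N) ℂ)
    (TCQ : Matrix (Fin M) (Fin M') ℝ) (TCA : Matrix (Fin N) (Fin N') ℂ)
    (hcompat : EH L M' N' * TFCmat L TFQ TFA = TFCmat L TFQ TFA * EH L M N)
    (μ : ℝ) (hμ : 0 ≤ μ)
    (hP : IsUnit (Ptilde L QΔt At μ))
    (hinv : IsUnit ((1 : Matrix (Fin L × Fin M × Fin N) (Fin L × Fin M × Fin N) ℂ)
      - EH L M N)) :
    Tcgc L Q A QΔt At TFQ TFA TCQ TCA μ -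
        ((1 : Matrix (Fin L × Fin M × Fin N) (Fin L × Fin M × Fin N) ℂ)
          - TCFmat L TCQ TCA * TFCmat L TFQ TFA) =
      (μ : ℂ) • (TCFmat L TCQ TCA * (Ptilde L QΔt At μ)⁻¹ *
        ((1 : Matrix (Fin L) (Fin L) ℂ) ⊗ₖ
          (cmplx (TFQ * Q) ⊗ₖ (TFA * A) - cmplx (QΔt * TFQ) ⊗ₖ (At * TFA)))) := by
  have hPi : (Ptilde L QΔt At μ)⁻¹ * Ptilde L QΔt At μ = 1 :=
    Matrix.nonsing_inv_mul _ ((Matrix.isUnit_iff_isUnit_det _).mp hP)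
  set F := TFCmat L TFQ TFA with hF
  set G := TCFmat L TCQ TCA with hG
  set P := Ptilde L QΔt At μ with hPdef
  set C := Cmat L Q A μ with hC
  set K := ((1 : Matrix (Fin L) (Fin L) ℂ) ⊗ₖ
      (cmplx (TFQ * Q) ⊗ₖ (TFA * A) - cmplx (QΔt * TFQ) ⊗ₖ (At * TFA))) with hK
  have h1 : F * ((1 : Matrix (Fin L) (Fin L) ℂ) ⊗ₖ (cmplx Q ⊗ₖ A)) =
      (1 : Matrix (Fin L) (Fin L) ℂ) ⊗ₖ (cmplx (TFQ * Q) ⊗ₖ (TFA * A)) := by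
    rw [hF, TFCmat, ← Matrix.mul_kronecker_mul, ← Matrix.mul_kronecker_mul, Matrix.one_mul,
      ← cmplx_mul]
  have h2 : ((1 : Matrix (Fin L) (Fin L) ℂ) ⊗ₖ (cmplx QΔt ⊗ₖ At)) * F =
      (1 : Matrix (Fin L) (Fin L) ℂ) ⊗ₖ (cmplx (QΔt * TFQ) ⊗ₖ (At * TFA)) := by
    rw [hF, TFCmat, ← Matrix.mul_kronecker_mul, ← Matrix.mul_kronecker_mul, Matrix.one_mul,
      ← cmplx_mul]
  have key : P * F - F * C = (μ : ℂ) • K := by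
    have eP : P * F = F - (μ : ℂ) • (((1 : Matrix (Fin L) (Fin L) ℂ) ⊗ₖ
        (cmplx QΔt ⊗ₖ At)) * F) - EH L M' N' * F := by
      rw [hPdef, Ptilde, Matrix.sub_mul, Matrix.sub_mul, Matrix.one_mul, Matrix.smul_mul]
    have eC : F * C = F - (μ : ℂ) • (F * ((1 : Matrix (Fin L) (Fin L) ℂ) ⊗ₖ
        (cmplx Q ⊗ₖ A))) - F * EH L M N := by
      rw [hC, Cmat, Matrix.mul_sub, Matrix.mul_sub, Matrix.mul_one, Matrix.mul_smul]
    rw [eP, eC, h1, h2, hcompat, hK, kronecker_sub', smul_sub]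
    abel
  have hGF : G * F = G * P⁻¹ * (P * F) := by
    rw [Matrix.mul_assoc G P⁻¹, ← Matrix.mul_assoc P⁻¹ P F, hPi, Matrix.one_mul]
  have expand : Tcgc L Q A QΔt At TFQ TFA TCQ TCA μ -
      ((1 : Matrix (Fin L × Fin M × Fin N) (Fin L × Fin M × Fin N) ℂ) - G * F) =
      G * P⁻¹ * (P * F - F * C) := by
    rw [Tcgc, Matrix.mul_sub, hGF, ← hF, ← hG, ← hPdef, ← hC, Matrix.mul_assoc (G * P⁻¹) F C]
    abel
  rw [expand, key, Matrix.mul_smul]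
end
end

section
/- (Convergence of PFASST in the non-stiff limit.) There exist constants c > 0 and μ* > 0 such that for all μ with 0 < μ < μ*, the matrices P̂(μ) and P̃(μ) are invertible and the spectral radius of the full PFASST iteration matrix satisfies ρ( T_S(μ) · T_CGC(μ) ) ≤ c · μ^{1/L}. -/
/-!
STATEMENT 7 (Convergence of PFASST in the non-stiff limit): There exist c > 0 and
μ* > 0 such that for all 0 < μ < μ*, the matrices P̂(μ) and P̃(μ) are invertible and
ρ( T_S(μ) · T_CGC(μ) ) ≤ c · μ^(1/L).
-/

noncomputable section

open Matrix
open scoped Kronecker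

/-!
At `μ = 0` the smoother `T_S` reduces to `E ⊗ H` and, thanks to `(E ⊗ H̃) T_F^C = T_F^C (E ⊗ H)`,
the coarse-grid correction reduces to `I - T_C^F T_F^C`. Their product
`(E ⊗ H)(I - T_C^F T_F^C) = E ⊗ (H (I - T_{C,Q}^F T_{F,Q}^C ⊗ T_{C,A}^F T_{F,A}^C))` vanishes in
power `L` because `E^L = 0`. The iteration matrix is an `O(μ)` perturbation of this nilpotent
matrix, so its `L`-th power is `O(μ)`, and `ρ(T) ≤ ‖T^L‖^(1/L) = O(μ^(1/L))`.
-/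

open Asymptotics Filter
open scoped Topology ENNReal

namespace Matrix

lemma kronecker_pow_s7 {R l m : Type*} [CommSemiring R] [Fintype l] [Fintype m] [DecidableEq l]
    [DecidableEq m] (A : Matrix l l R) (B : Matrix m m R) (k : ℕ) :
    (A ⊗ₖ B) ^ k = (A ^ k) ⊗ₖ (B ^ k) := by
  induction k with
  | zero => simp
  | succ k ih => rw [pow_succ, ih, ← mul_kronecker_mul, ← pow_succ, ← pow_succ]

lemma kronecker_sub {R l m n p : Type*} [Ring R] (A : Matrix l m R) (B C : Matrix n p R) :
    A ⊗ₖ (B - C) = A ⊗ₖ B - A ⊗ₖ C := by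
  ext
  simp [mul_sub]

end Matrix

section Nilpotency

variable {L M N M' N' : ℕ}

lemma Emat_pow (k : ℕ) :
    Emat L ^ k = Matrix.of fun i j : Fin L => if (i : ℕ) = j + k then 1 else 0 := by
  induction k with
  | zero => ext i j; simp [Matrix.one_apply, Fin.ext_iff]
  | succ k ih =>
    ext i j
    rw [pow_succ, ih, Matrix.mul_apply]
    simp only [Emat, Matrix.of_apply, mul_ite, mul_one, mul_zero]
    by_cases hj : (j : ℕ) + 1 < L
    · rw [Finset.sum_eq_single ⟨j + 1, hj⟩ (fun l _ hl => if_neg fun h => hl (Fin.ext h))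
        (by simp), if_pos rfl, add_right_comm, add_assoc]
    · rw [if_neg (by omega)]
      exact Finset.sum_eq_zero fun l _ => if_neg (by omega)

lemma Emat_kronecker_pow_self {m : Type*} [Fintype m] [DecidableEq m] (X : Matrix m m ℂ) :
    (Emat L ⊗ₖ X) ^ L = 0 := by
  have hE : Emat L ^ L = 0 := by
    ext i j
    simp only [Emat_pow, Matrix.of_apply, Matrix.zero_apply, ite_eq_right_iff]
    omega
  rw [Matrix.kronecker_pow_s7, hE, Matrix.zero_kronecker]

lemma isUnit_one_sub_EH : IsUnit (1 - EH L M N) :=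
  IsNilpotent.isUnit_one_sub ⟨L, Emat_kronecker_pow_self _⟩

lemma EH_mul_one_sub_TCFmat_mul_TFCmat (TFQ : Matrix (Fin M') (Fin M) ℝ)
    (TFA : Matrix (Fin N') (Fin N) ℂ) (TCQ : Matrix (Fin M) (Fin M') ℝ)
    (TCA : Matrix (Fin N) (Fin N') ℂ) :
    EH L M N * (1 - TCFmat L TCQ TCA * TFCmat L TFQ TFA) =
      Emat L ⊗ₖ (Hmat M N * (1 - (cmplx TCQ ⊗ₖ TCA) * (cmplx TFQ ⊗ₖ TFA))) := by
  rw [EH, TCFmat, TFCmat, ← Matrix.mul_kronecker_mul, one_mul, ← Matrix.one_kronecker_one,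
    ← Matrix.kronecker_sub, ← Matrix.mul_kronecker_mul, mul_one]

end Nilpotency

section LinftyNorm

-- Any norm would do; the `L∞` operator norm is also submultiplicative on rectangular matrices.
attribute [local instance] Matrix.linftyOpNormedAddCommGroup Matrix.linftyOpNormedSpace
  Matrix.linftyOpNormedRing Matrix.linftyOpNormedAlgebra

namespace Matrix

section IsBigO

variable {R α : Type*} [NormedRing R] {l : Filter α} {g : α → ℝ} {m n p : Type*} [Fintype m]
  [Fintype n] [Fintype p]

lemma isBigO_mul {f : α → Matrix m n R} {f' : α → Matrix n p R} {g' : α → ℝ}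
    (h : f =O[l] g) (h' : f' =O[l] g') : (fun x => f x * f' x) =O[l] fun x => g x * g' x := by
  obtain ⟨c, hc⟩ := h.bound
  obtain ⟨c', hc'⟩ := h'.bound
  refine .of_bound (c * c') ?_
  filter_upwards [hc, hc'] with x hx hx'
  calc ‖f x * f' x‖ ≤ ‖f x‖ * ‖f' x‖ := linfty_opNorm_mul _ _
    _ ≤ (c * ‖g x‖) * (c' * ‖g' x‖) :=
        mul_le_mul hx hx' (norm_nonneg _) ((norm_nonneg _).trans hx)
    _ = c * c' * ‖g x * g' x‖ := by rw [norm_mul]; ring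

lemma isBigO_mul_sub_mul {f : α → Matrix m n R} {f' : α → Matrix n p R} {a : Matrix m n R}
    {a' : Matrix n p R} (hg : g =O[l] fun _ => (1 : ℝ)) (h : (fun x => f x - a) =O[l] g)
    (h' : (fun x => f' x - a') =O[l] g) : (fun x => f x * f' x - a * a') =O[l] g := by
  have hf' : f' =O[l] fun _ => (1 : ℝ) :=
    ((h'.trans hg).add (isBigO_const_const a' one_ne_zero l)).congr_left fun x => sub_add_cancel _ _
  have h₁ := (isBigO_mul h hf').congr_right fun x => mul_one (g x)
  have h₂ := (isBigO_mul (isBigO_const_const a one_ne_zero l) h').congr_right fun x => one_mul (g x)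
  refine (h₁.add h₂).congr_left fun x => ?_
  simp only [Matrix.sub_mul, Matrix.mul_sub]
  abel

lemma isBigO_const_mul_sub_mul {f' : α → Matrix n p R} (a : Matrix m n R) {a' : Matrix n p R}
    (hg : g =O[l] fun _ => (1 : ℝ)) (h' : (fun x => f' x - a') =O[l] g) :
    (fun x => a * f' x - a * a') =O[l] g :=
  isBigO_mul_sub_mul (f := fun _ => a) hg (by simpa using isBigO_zero g l) h'

lemma isBigO_pow_sub_pow [DecidableEq n] {f : α → Matrix n n R} {a : Matrix n n R}
    (hg : g =O[l] fun _ => (1 : ℝ)) (h : (fun x => f x - a) =O[l] g) (k : ℕ) :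
    (fun x => f x ^ k - a ^ k) =O[l] g := by
  induction k with
  | zero => simpa using isBigO_zero g l
  | succ k ih => simpa only [pow_succ] using isBigO_mul_sub_mul hg ih h

lemma isBigO_ofReal_smul (K : Matrix m n ℂ) {l : Filter ℝ} :
    (fun μ : ℝ => (μ : ℂ) • K) =O[l] fun μ => μ :=
  .of_bound ‖K‖ (.of_forall fun μ => by simp [norm_smul, mul_comm])

end IsBigO

variable {ι : Type*} [Fintype ι] [DecidableEq ι]

lemma isBigO_inverse_sub_smul_sub_inverse {P B : Matrix ι ι ℂ} (hP : IsUnit P) :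
    (fun μ : ℝ => Ring.inverse (P - (μ : ℂ) • B) - Ring.inverse P) =O[𝓝 0] fun μ => μ := by
  have hd : DifferentiableAt ℝ (fun μ : ℝ => Ring.inverse (P - (μ : ℂ) • B)) 0 := by
    have hP0 : IsUnit (P - ((0 : ℝ) : ℂ) • B) := by simpa using hP
    exact DifferentiableAt.comp (g := Ring.inverse) (0 : ℝ)
      (differentiableAt_inverse (𝕜 := ℝ) hP0) (by fun_prop)
  simpa using hd.isBigO_sub

lemma eventually_isUnit_sub_smul {P B : Matrix ι ι ℂ} (hP : IsUnit P) :
    ∀ᶠ μ : ℝ in 𝓝 0, IsUnit (P - (μ : ℂ) • B) := by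
  have hc : Continuous fun μ : ℝ => P - (μ : ℂ) • B := by fun_prop
  have hP0 : IsUnit (P - ((0 : ℝ) : ℂ) • B) := by simpa using hP
  exact hc.continuousAt.eventually_mem (Units.isOpen.mem_nhds hP0)

lemma linfty_opNorm_one_le_s7 {R : Type*} [NormedRing R] [NormOneClass R] :
    ‖(1 : Matrix ι ι R)‖ ≤ 1 := by
  rw [← diagonal_one, linfty_opNorm_diagonal]
  exact pi_norm_le_iff_of_nonneg zero_le_one |>.mpr fun _ => by simp

lemma spectralRadius_le_of_norm_pow_le {T : Matrix ι ι ℂ} {k : ℕ} (hk : 0 < k) {r : ℝ}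
    (hr : ‖T ^ k‖ ≤ r) : spectralRadius ℂ T ≤ ENNReal.ofReal (r ^ (1 / k : ℝ)) := by
  obtain ⟨n, rfl⟩ : ∃ n, k = n + 1 := ⟨k - 1, by omega⟩
  have hexp : (0 : ℝ) ≤ 1 / (n + 1) := by positivity
  calc spectralRadius ℂ T
      ≤ (‖T ^ (n + 1)‖₊ : ℝ≥0∞) ^ (1 / (n + 1) : ℝ) *
          (‖(1 : Matrix ι ι ℂ)‖₊ : ℝ≥0∞) ^ (1 / (n + 1) : ℝ) :=
        spectrum.spectralRadius_le_pow_nnnorm_pow_one_div ℂ T n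
    _ ≤ ENNReal.ofReal r ^ (1 / (n + 1) : ℝ) * 1 := by
        gcongr
        · rw [← ENNReal.ofReal_coe_nnreal, coe_nnnorm]
          exact ENNReal.ofReal_le_ofReal hr
        · exact ENNReal.rpow_le_one (by exact_mod_cast linfty_opNorm_one_le_s7) hexp
    _ = ENNReal.ofReal (r ^ (1 / (n + 1 : ℕ) : ℝ)) := by
        rw [mul_one, ENNReal.ofReal_rpow_of_nonneg ((norm_nonneg _).trans hr) hexp]
        norm_cast

lemma eventually_spectralRadius_le_rpow_of_pow_eq_zero {T : ℝ → Matrix ι ι ℂ} {T₀ : Matrix ι ι ℂ}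
    {k : ℕ} (hk : 0 < k) (hT₀ : T₀ ^ k = 0) (hT : (fun μ => T μ - T₀) =O[𝓝 0] fun μ => μ) :
    ∃ c > 0, ∀ᶠ μ in 𝓝[>] (0 : ℝ),
      spectralRadius ℂ (T μ) ≤ ENNReal.ofReal (c * μ ^ (1 / k : ℝ)) := by
  have hpow : (fun μ => T μ ^ k) =O[𝓝 0] fun μ => μ := by
    simpa only [hT₀, sub_zero] using
      isBigO_pow_sub_pow (g := fun μ => μ) (tendsto_id.isBigO_one ℝ) hT k
  obtain ⟨c, hc, hbound⟩ := hpow.exists_pos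
  refine ⟨c ^ (1 / k : ℝ), by positivity, ?_⟩
  filter_upwards [nhdsWithin_le_nhds hbound.bound, self_mem_nhdsWithin] with μ hμ (hμ₀ : 0 < μ)
  rw [← Real.mul_rpow hc.le hμ₀.le]
  exact spectralRadius_le_of_norm_pow_le hk (by simpa [abs_of_pos hμ₀] using hμ)

end Matrix

variable {M N M' N' : ℕ} (L : ℕ) (Q QΔ : Matrix (Fin M) (Fin M) ℝ) (A : Matrix (Fin N) (Fin N) ℂ)
  (QΔt : Matrix (Fin M') (Fin M') ℝ) (At : Matrix (Fin N') (Fin N') ℂ)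
  (TFQ : Matrix (Fin M') (Fin M) ℝ) (TFA : Matrix (Fin N') (Fin N) ℂ)
  (TCQ : Matrix (Fin M) (Fin M') ℝ) (TCA : Matrix (Fin N) (Fin N') ℂ)

lemma Ptilde_eq (μ : ℝ) :
    Ptilde L QΔt At μ = (1 - EH L M' N') - (μ : ℂ) • (1 ⊗ₖ (cmplx QΔt ⊗ₖ At)) :=
  sub_right_comm _ _ _

lemma eventually_isUnit_Phat : ∀ᶠ μ : ℝ in 𝓝 0, IsUnit (Phat L QΔ A μ) :=
  Matrix.eventually_isUnit_sub_smul isUnit_one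

lemma eventually_isUnit_Ptilde : ∀ᶠ μ : ℝ in 𝓝 0, IsUnit (Ptilde L QΔt At μ) := by
  simpa only [Ptilde_eq] using Matrix.eventually_isUnit_sub_smul isUnit_one_sub_EH

lemma isBigO_Cmat_sub : (fun μ => Cmat L Q A μ - (1 - EH L M N)) =O[𝓝 0] fun μ => μ :=
  (Matrix.isBigO_ofReal_smul _).neg_left.congr_left fun μ => by rw [Cmat]; abel

lemma isBigO_Tsmooth_sub : (fun μ => Tsmooth L Q QΔ A μ - EH L M N) =O[𝓝 0] fun μ => μ := by
  have hinv : (fun μ => (Phat L QΔ A μ)⁻¹ - 1) =O[𝓝 0] fun μ => μ := by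
    simpa [Matrix.nonsing_inv_eq_ringInverse, Phat] using
      Matrix.isBigO_inverse_sub_smul_sub_inverse (B := 1 ⊗ₖ (cmplx QΔ ⊗ₖ A)) isUnit_one
  refine (Matrix.isBigO_mul_sub_mul (tendsto_id.isBigO_one ℝ) hinv
    (isBigO_Cmat_sub L Q A)).neg_left.congr_left fun μ => ?_
  rw [Tsmooth, one_mul]
  abel

lemma isBigO_Tcgc_sub (hcompat : EH L M' N' * TFCmat L TFQ TFA = TFCmat L TFQ TFA * EH L M N) :
    (fun μ => Tcgc L Q A QΔt At TFQ TFA TCQ TCA μ - (1 - TCFmat L TCQ TCA * TFCmat L TFQ TFA))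
      =O[𝓝 0] fun μ => μ := by
  have hμ : (fun μ : ℝ => μ) =O[𝓝 0] fun _ => (1 : ℝ) := tendsto_id.isBigO_one ℝ
  have hinv : (fun μ => (Ptilde L QΔt At μ)⁻¹ - (1 - EH L M' N')⁻¹) =O[𝓝 0] fun μ => μ := by
    simpa only [Matrix.nonsing_inv_eq_ringInverse, Ptilde_eq] using
      Matrix.isBigO_inverse_sub_smul_sub_inverse isUnit_one_sub_EH
  have hlim : (1 - EH L M' N')⁻¹ * (TFCmat L TFQ TFA * (1 - EH L M N)) = TFCmat L TFQ TFA := by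
    have hshift : TFCmat L TFQ TFA * (1 - EH L M N) = (1 - EH L M' N') * TFCmat L TFQ TFA := by
      rw [Matrix.mul_sub, Matrix.sub_mul, hcompat, Matrix.mul_one, Matrix.one_mul]
    rw [hshift, Matrix.nonsing_inv_mul_cancel_left _ _
      ((Matrix.isUnit_iff_isUnit_det _).mp isUnit_one_sub_EH)]
  have h := Matrix.isBigO_const_mul_sub_mul (TCFmat L TCQ TCA) hμ
    (Matrix.isBigO_mul_sub_mul hμ hinv
      (Matrix.isBigO_const_mul_sub_mul (TFCmat L TFQ TFA) hμ (isBigO_Cmat_sub L Q A)))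
  refine h.neg_left.congr_left fun μ => ?_
  rw [hlim, Tcgc]
  simp only [Matrix.mul_assoc]
  abel

end LinftyNorm

theorem stmt_7_general (L M N M' N' : ℕ) (hL : 0 < L)
    (Q QΔ : Matrix (Fin M) (Fin M) ℝ) (A : Matrix (Fin N) (Fin N) ℂ)
    (QΔt : Matrix (Fin M') (Fin M') ℝ) (At : Matrix (Fin N') (Fin N') ℂ)
    (TFQ : Matrix (Fin M') (Fin M) ℝ) (TFA : Matrix (Fin N') (Fin N) ℂ)
    (TCQ : Matrix (Fin M) (Fin M') ℝ) (TCA : Matrix (Fin N) (Fin N') ℂ)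
    (hcompat : EH L M' N' * TFCmat L TFQ TFA = TFCmat L TFQ TFA * EH L M N) :
    ∃ c > (0 : ℝ), ∃ μs > (0 : ℝ), ∀ μ : ℝ, 0 < μ → μ < μs →
      IsUnit (Phat L QΔ A μ) ∧ IsUnit (Ptilde L QΔt At μ) ∧
      spectralRadius ℂ (Tsmooth L Q QΔ A μ * Tcgc L Q A QΔt At TFQ TFA TCQ TCA μ) ≤
        ENNReal.ofReal (c * μ ^ ((1 : ℝ) / (L : ℝ))) := by
  have hnil : (EH L M N * (1 - TCFmat L TCQ TCA * TFCmat L TFQ TFA)) ^ L = 0 := by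
    rw [EH_mul_one_sub_TCFmat_mul_TFCmat, Emat_kronecker_pow_self]
  have hT := Matrix.isBigO_mul_sub_mul (tendsto_id.isBigO_one ℝ)
    (isBigO_Tsmooth_sub L Q QΔ A) (isBigO_Tcgc_sub L Q A QΔt At TFQ TFA TCQ TCA hcompat)
  obtain ⟨c, hc, hρ⟩ := Matrix.eventually_spectralRadius_le_rpow_of_pow_eq_zero hL hnil hT
  have hall := ((eventually_isUnit_Phat L QΔ A).filter_mono nhdsWithin_le_nhds).and
    (((eventually_isUnit_Ptilde L QΔt At).filter_mono nhdsWithin_le_nhds).and hρ)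
  obtain ⟨μs, hμs, hsub⟩ := mem_nhdsGT_iff_exists_Ioo_subset.mp hall
  exact ⟨c, hc, μs, hμs, fun μ h₀ h₁ => hsub ⟨h₀, h₁⟩⟩

theorem stmt_7 (L M N M' N' : ℕ) (hL : 0 < L) (hM : 0 < M) (hN : 0 < N)
    (hM' : 0 < M') (hN' : 0 < N')
    (Q QΔ : Matrix (Fin M) (Fin M) ℝ) (A : Matrix (Fin N) (Fin N) ℂ)
    (QΔt : Matrix (Fin M') (Fin M') ℝ) (At : Matrix (Fin N') (Fin N') ℂ)
    (TFQ : Matrix (Fin M') (Fin M) ℝ) (TFA : Matrix (Fin N') (Fin N) ℂ)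
    (TCQ : Matrix (Fin M) (Fin M') ℝ) (TCA : Matrix (Fin N) (Fin N') ℂ)
    (hcompat : EH L M' N' * TFCmat L TFQ TFA = TFCmat L TFQ TFA * EH L M N) :
    ∃ c > (0 : ℝ), ∃ μs > (0 : ℝ), ∀ μ : ℝ, 0 < μ → μ < μs →
      IsUnit (Phat L QΔ A μ) ∧ IsUnit (Ptilde L QΔt At μ) ∧
      spectralRadius ℂ (Tsmooth L Q QΔ A μ * Tcgc L Q A QΔt At TFQ TFA TCQ TCA μ) ≤
        ENNReal.ofReal (c * μ ^ ((1 : ℝ) / (L : ℝ))) :=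
  stmt_7_general L M N M' N' hL Q QΔ A QΔt At TFQ TFA TCQ TCA hcompat
end
end

section
/- Suppose Q_Δ ∈ ℝ^{M×M} is invertible and there is a lower triangular matrix Λ ∈ ℝ^{M×M} with unit diagonal such that Q = Q_Δ Λ^T (this is the LU-trick choice Q_Δ = U^T for Q^T = Λ U). Then I_M − Q_Δ^{-1} Q = I_M − Λ^T is strictly upper triangular, hence (I_M − Q_Δ^{-1} Q)^M = 0, and consequently the stiff-limit smoother matrix T_S(∞) = I_L ⊗ (I_M − Q_Δ^{-1} Q) ⊗ I_N satisfies T_S(∞)^M = 0. -/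
noncomputable section

open Matrix
open scoped Kronecker

lemma cmplx_pow {n : Type*} [Fintype n] [DecidableEq n] (A : Matrix n n ℝ) (k : ℕ) :
    cmplx (A ^ k) = cmplx A ^ k := by
  have : cmplx A = Complex.ofRealHom.mapMatrix A := rfl
  simp only [cmplx, this]
  exact map_pow Complex.ofRealHom.mapMatrix A k

lemma kron_pow {a b : Type*} [Fintype a] [DecidableEq a] [Fintype b] [DecidableEq b]
    (B : Matrix a a ℂ) (C : Matrix b b ℂ)
    (k : ℕ) : (B ⊗ₖ C) ^ k = (B ^ k) ⊗ₖ (C ^ k) := by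
  induction k with
  | zero => simp [Matrix.one_kronecker_one]
  | succ n ih => rw [pow_succ, pow_succ, pow_succ, ih, Matrix.mul_kronecker_mul]

lemma strict_pow {M : ℕ} (A : Matrix (Fin M) (Fin M) ℝ)
    (hA : ∀ i j : Fin M, j ≤ i → A i j = 0) (k : ℕ) :
    ∀ i j : Fin M, (j : ℕ) < (i : ℕ) + k → (A ^ k) i j = 0 := by
  induction k with
  | zero =>
    intro i j h
    simp only [Nat.add_zero] at h
    rw [pow_zero]
    exact Matrix.one_apply_ne (by intro e; rw [e] at h; omega)
  | succ n ih =>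
    intro i j h
    rw [pow_succ', Matrix.mul_apply]
    apply Finset.sum_eq_zero
    intro l _
    rcases le_or_gt l i with hl | hl
    · rw [hA i l hl, zero_mul]
    · rw [ih l j (by omega), mul_zero]

theorem stmt_10 (L M N : ℕ) (hL : 0 < L) (hM : 0 < M) (hN : 0 < N)
    (Q QΔ Λ : Matrix (Fin M) (Fin M) ℝ)
    (hQΔ : IsUnit QΔ)
    (hΛlow : ∀ i j : Fin M, i < j → Λ i j = 0)
    (hΛdiag : ∀ i : Fin M, Λ i i = 1)
    (hLU : Q = QΔ * Λᵀ) :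
    (1 : Matrix (Fin M) (Fin M) ℝ) - QΔ⁻¹ * Q = 1 - Λᵀ ∧
    (∀ i j : Fin M, j ≤ i → ((1 : Matrix (Fin M) (Fin M) ℝ) - QΔ⁻¹ * Q) i j = 0) ∧
    ((1 : Matrix (Fin M) (Fin M) ℝ) - QΔ⁻¹ * Q) ^ M = 0 ∧
    ((1 : Matrix (Fin L) (Fin L) ℂ) ⊗ₖ
        (cmplx ((1 : Matrix (Fin M) (Fin M) ℝ) - QΔ⁻¹ * Q) ⊗ₖ
          (1 : Matrix (Fin N) (Fin N) ℂ))) ^ M = 0 := by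
  have hmain : (1 : Matrix (Fin M) (Fin M) ℝ) - QΔ⁻¹ * Q = 1 - Λᵀ := by
    rw [hLU, ← Matrix.mul_assoc, Matrix.nonsing_inv_mul _ ((Matrix.isUnit_iff_isUnit_det _).mp hQΔ),
      Matrix.one_mul]
  have hstrict : ∀ i j : Fin M, j ≤ i →
      ((1 : Matrix (Fin M) (Fin M) ℝ) - QΔ⁻¹ * Q) i j = 0 := by
    intro i j hji
    rw [hmain]
    rcases eq_or_lt_of_le hji with h | h
    · simp [Matrix.sub_apply, Matrix.one_apply, Matrix.transpose_apply, h.symm, hΛdiag, ← h]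
    · rw [Matrix.sub_apply, Matrix.transpose_apply, hΛlow j i h,
        Matrix.one_apply_ne (ne_of_lt h).symm, sub_zero]
  have hpow : ((1 : Matrix (Fin M) (Fin M) ℝ) - QΔ⁻¹ * Q) ^ M = 0 := by
    ext i j
    rw [strict_pow _ hstrict M i j (by omega)]
    simp
  refine ⟨hmain, hstrict, hpow, ?_⟩
  rw [kron_pow, kron_pow, ← cmplx_pow, hpow]
  have : cmplx (0 : Matrix (Fin M) (Fin M) ℝ) = 0 := by
    ext i j; simp [cmplx]
  rw [this]
  simp
end
end

section
/- Assume Q̃_Δ and Ã are invertible and define the stiff-limit coarse-grid correction T_CGC(∞) = I_{LMN} − T_C^F · (I_L ⊗ Q̃_Δ ⊗ Ã)^{-1} · T_F^C · (I_L ⊗ Q ⊗ A). Then there exist constants c > 0 and μ* > 0 such that for all μ ≥ μ*, the coarse preconditioner P̃(μ) is invertible and ‖T_CGC(μ) − T_CGC(∞)‖ ≤ c / μ. -/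
/-!
STATEMENT 12: Assume Q̃_Δ and Ã are invertible and define
T_CGC(∞) = I − T_C^F (I_L ⊗ Q̃_Δ ⊗ Ã)⁻¹ T_F^C (I_L ⊗ Q ⊗ A). Then there exist
c > 0 and μ* > 0 such that for all μ ≥ μ*, P̃(μ) is invertible and
‖T_CGC(μ) − T_CGC(∞)‖ ≤ c / μ.
-/

noncomputable section

open Matrix
open scoped Kronecker

lemma key_aux {n p : Type*} [Fintype n] [Fintype p] [DecidableEq n] [DecidableEq p]
    (m : ℂ) (hm : m ≠ 0)
    (a : Matrix n p ℂ) (b : Matrix p n ℂ) (W R K : Matrix p p ℂ) (S G1 : Matrix n n ℂ)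
    (hRK : R * K = m • (R - 1)) :
    ((1 : Matrix n n ℂ) - a * ((-m)⁻¹ • (R * W)) * b * (G1 - m • S)) -
      ((1 : Matrix n n ℂ) - a * W * b * S)
      = m⁻¹ • (a * (R * (W * (b * G1))) - a * ((R * K) * (W * (b * S)))) := by
  rw [hRK]
  simp only [inv_neg, Matrix.mul_sub, Matrix.sub_mul, smul_sub, sub_smul,
    Matrix.smul_mul, Matrix.mul_smul, smul_mul_assoc, mul_smul_comm, Matrix.neg_mul, Matrix.mul_neg,
    smul_smul, neg_smul, smul_neg,
    Matrix.mul_one, Matrix.one_mul, inv_mul_cancel₀ hm, mul_inv_cancel₀ hm,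
    one_smul, neg_neg, Matrix.mul_assoc]
  abel

open scoped Matrix.Norms.L2Operator in
lemma opNorm_eq_l2 {n : Type*} [Fintype n] [DecidableEq n] (A : Matrix n n ℂ) :
    opNorm A = ‖A‖ := rfl

set_option maxHeartbeats 1600000 in
open scoped Matrix.Norms.L2Operator in
theorem stmt_12 (L M N M' N' : ℕ) (hL : 0 < L) (hM : 0 < M) (hN : 0 < N)
    (hM' : 0 < M') (hN' : 0 < N')
    (Q : Matrix (Fin M) (Fin M) ℝ) (A : Matrix (Fin N) (Fin N) ℂ)
    (QΔt : Matrix (Fin M') (Fin M') ℝ) (At : Matrix (Fin N') (Fin N') ℂ)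
    (TFQ : Matrix (Fin M') (Fin M) ℝ) (TFA : Matrix (Fin N') (Fin N) ℂ)
    (TCQ : Matrix (Fin M) (Fin M') ℝ) (TCA : Matrix (Fin N) (Fin N') ℂ)
    (hQΔt : IsUnit QΔt) (hAt : IsUnit At) :
    ∃ c > (0 : ℝ), ∃ μs > (0 : ℝ), ∀ μ : ℝ, μs ≤ μ →
      IsUnit (Ptilde L QΔt At μ) ∧
      opNorm (Tcgc L Q A QΔt At TFQ TFA TCQ TCA μ -
          ((1 : Matrix (Fin L × Fin M × Fin N) (Fin L × Fin M × Fin N) ℂ)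
            - TCFmat L TCQ TCA *
              ((1 : Matrix (Fin L) (Fin L) ℂ) ⊗ₖ (cmplx QΔt ⊗ₖ At))⁻¹ *
              TFCmat L TFQ TFA *
              ((1 : Matrix (Fin L) (Fin L) ℂ) ⊗ₖ (cmplx Q ⊗ₖ A)))) ≤ c / μ := by
  classical
  set Bc : Matrix (Fin L × Fin M' × Fin N') (Fin L × Fin M' × Fin N') ℂ :=
    (1 : Matrix (Fin L) (Fin L) ℂ) ⊗ₖ (cmplx QΔt ⊗ₖ At) with hBcdef
  have hdetBc : IsUnit Bc.det := by
    rw [hBcdef, Matrix.det_kronecker, Matrix.det_kronecker]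
    have h1 : IsUnit (cmplx QΔt).det := by
      have h0 := (Matrix.isUnit_iff_isUnit_det QΔt).mp hQΔt
      have h0' : IsUnit (((algebraMap ℝ ℂ) : ℝ →+* ℂ).mapMatrix QΔt).det := by
        rw [← RingHom.map_det]; exact h0.map _
      exact h0'
    have h2 : IsUnit At.det := (Matrix.isUnit_iff_isUnit_det At).mp hAt
    simp only [Matrix.det_one, one_pow, one_mul]
    exact ((h1.pow _).mul (h2.pow _)).pow _
  set W := Bc⁻¹ with hWdef
  have hBcW : Bc * W = 1 := Matrix.mul_nonsing_inv _ hdetBc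
  have hWBc : W * Bc = 1 := Matrix.nonsing_inv_mul _ hdetBc
  set K := W * ((1 : Matrix (Fin L × Fin M' × Fin N') (Fin L × Fin M' × Fin N') ℂ)
    - EH L M' N') with hKdef
  set a := TCFmat L TCQ TCA with hadef
  set b := TFCmat L TFQ TFA with hbdef
  set S : Matrix (Fin L × Fin M × Fin N) (Fin L × Fin M × Fin N) ℂ :=
    (1 : Matrix (Fin L) (Fin L) ℂ) ⊗ₖ (cmplx Q ⊗ₖ A) with hSdef
  set G1 := (1 : Matrix (Fin L × Fin M × Fin N) (Fin L × Fin M × Fin N) ℂ) - EH L M N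
    with hG1def
  refine ⟨2 * ‖a‖ * (‖W * (b * G1)‖ + ‖K‖ * ‖W * (b * S)‖) + 1, by positivity,
    2 * ‖K‖ + 1, by positivity, fun μ hμ => ?_⟩
  have hnK : (0:ℝ) ≤ ‖K‖ := norm_nonneg _
  have hμ1 : (1 : ℝ) ≤ μ := by linarith
  have hμpos : (0 : ℝ) < μ := by linarith
  have hm : ((μ : ℂ)) ≠ 0 := by
    exact_mod_cast (ne_of_gt hμpos)
  set t := ((μ:ℂ))⁻¹ • K with htdef
  have hmnorm : ‖((μ:ℂ))⁻¹‖ = μ⁻¹ := by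
    rw [norm_inv, Complex.norm_real, Real.norm_eq_abs, abs_of_pos hμpos]
  have htnorm : ‖t‖ ≤ 1/2 := by
    rw [htdef, norm_smul, hmnorm]
    rw [inv_mul_le_iff₀ hμpos]
    nlinarith
  have htlt : ‖t‖ < 1 := lt_of_le_of_lt htnorm (by norm_num)
  have hu : IsUnit ((1 : Matrix (Fin L × Fin M' × Fin N') (Fin L × Fin M' × Fin N') ℂ) - t) :=
    ⟨Units.oneSub t htlt, rfl⟩
  have hdet1t := (Matrix.isUnit_iff_isUnit_det _).mp hu
  set R := ((1 : Matrix (Fin L × Fin M' × Fin N') (Fin L × Fin M' × Fin N') ℂ) - t)⁻¹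
    with hRdef
  have hR1 : R * (1 - t) = 1 := Matrix.nonsing_inv_mul _ hdet1t
  have hR2 : (1 - t) * R = 1 := Matrix.mul_nonsing_inv _ hdet1t
  have hR1' : R - R * t = 1 := by
    have := hR1
    rwa [Matrix.mul_sub, Matrix.mul_one] at this
  have hReq : R = 1 + R * t := sub_eq_iff_eq_add.mp hR1'
  have hRnorm : ‖R‖ ≤ 2 := by
    have h1 : ‖R‖ ≤ ‖(1 : Matrix (Fin L × Fin M' × Fin N') (Fin L × Fin M' × Fin N') ℂ)‖
        + ‖R‖ * ‖t‖ := by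
      calc ‖R‖ = ‖(1 : Matrix (Fin L × Fin M' × Fin N') (Fin L × Fin M' × Fin N') ℂ) + R * t‖ := by
            rw [← hReq]
        _ ≤ ‖(1 : Matrix (Fin L × Fin M' × Fin N') (Fin L × Fin M' × Fin N') ℂ)‖ + ‖R * t‖ :=
            norm_add_le _ _
        _ ≤ _ := by gcongr; exact norm_mul_le _ _
    have hone : ‖(1 : Matrix (Fin L × Fin M' × Fin N') (Fin L × Fin M' × Fin N') ℂ)‖ ≤ 1 := by
      rw [Matrix.cstar_norm_def, _root_.map_one]
      exact ContinuousLinearMap.norm_id_le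
    nlinarith [norm_nonneg R]
  -- the factorization of Ptilde
  have hBct : Bc * t = ((μ:ℂ))⁻¹ • ((1 : Matrix (Fin L × Fin M' × Fin N') (Fin L × Fin M' × Fin N') ℂ) - EH L M' N') := by
    rw [htdef, Matrix.mul_smul, hKdef, ← Matrix.mul_assoc, hBcW, Matrix.one_mul]
  have hP : Ptilde L QΔt At μ = (-(μ:ℂ)) • (Bc * (1 - t)) := by
    rw [Matrix.mul_sub, Matrix.mul_one, hBct, Ptilde, ← hBcdef]
    rw [smul_sub, smul_smul, neg_mul, mul_inv_cancel₀ hm]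
    simp only [neg_smul, one_smul, sub_neg_eq_add]
    abel
  set Pinv := (-(μ:ℂ))⁻¹ • (R * W) with hPinvdef
  have hmne : (-(μ:ℂ)) ≠ 0 := neg_ne_zero.mpr hm
  have hright : Ptilde L QΔt At μ * Pinv = 1 := by
    rw [hP, hPinvdef, smul_mul_smul_comm, mul_inv_cancel₀ hmne, one_smul,
      Matrix.mul_assoc Bc, ← Matrix.mul_assoc (1 - t), hR2, Matrix.one_mul, hBcW]
  have hleft : Pinv * Ptilde L QΔt At μ = 1 := by
    rw [hP, hPinvdef, smul_mul_smul_comm, inv_mul_cancel₀ hmne, one_smul]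
    calc R * W * (Bc * (1 - t)) = R * (W * Bc * (1 - t)) := by
          rw [Matrix.mul_assoc, Matrix.mul_assoc]
      _ = 1 := by rw [hWBc, Matrix.one_mul, hR1]
  have hPunit : IsUnit (Ptilde L QΔt At μ) :=
    ⟨⟨Ptilde L QΔt At μ, Pinv, hright, hleft⟩, rfl⟩
  refine ⟨hPunit, ?_⟩
  have hPinveq : (Ptilde L QΔt At μ)⁻¹ = Pinv := Matrix.inv_eq_right_inv hright
  have hC : Cmat L Q A μ = G1 - (μ:ℂ) • S := by
    rw [Cmat, hG1def, hSdef, EH, sub_right_comm]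
  have hRK : R * K = (μ:ℂ) • (R - 1) := by
    have h1 : R * t = R - 1 := by
      rw [eq_sub_iff_add_eq, add_comm]
      exact (sub_eq_iff_eq_add.mp hR1').symm
    rw [htdef, Matrix.mul_smul] at h1
    rw [← h1, smul_smul, mul_inv_cancel₀ hm, one_smul]
  set Z := a * (R * (W * (b * G1))) - a * ((R * K) * (W * (b * S))) with hZdef
  have key : Tcgc L Q A QΔt At TFQ TFA TCQ TCA μ -
      ((1 : Matrix (Fin L × Fin M × Fin N) (Fin L × Fin M × Fin N) ℂ)
        - a * W * b * S) = ((μ:ℂ))⁻¹ • Z := by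
    rw [hZdef, Tcgc, hPinveq, hPinvdef, hC, ← hadef, ← hbdef]
    exact key_aux (μ:ℂ) hm a b W R K S G1 hRK
  rw [opNorm_eq_l2, key, norm_smul, hmnorm]
  have hZnorm : ‖Z‖ ≤ 2 * ‖a‖ * (‖W * (b * G1)‖ + ‖K‖ * ‖W * (b * S)‖) := by
    have e1 : ‖a * (R * (W * (b * G1)))‖ ≤ ‖a‖ * (‖R‖ * ‖W * (b * G1)‖) :=
      le_trans (Matrix.l2_opNorm_mul _ _)
        (by gcongr; exact Matrix.l2_opNorm_mul _ _)
    have e2 : ‖a * ((R * K) * (W * (b * S)))‖ ≤ ‖a‖ * ((‖R‖ * ‖K‖) * ‖W * (b * S)‖) := by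
      refine le_trans (Matrix.l2_opNorm_mul _ _) ?_
      gcongr
      refine le_trans (Matrix.l2_opNorm_mul _ _) ?_
      gcongr
      exact Matrix.l2_opNorm_mul _ _
    calc ‖Z‖ ≤ ‖a * (R * (W * (b * G1)))‖ + ‖a * ((R * K) * (W * (b * S)))‖ :=
          norm_sub_le _ _
      _ ≤ ‖a‖ * (‖R‖ * ‖W * (b * G1)‖) + ‖a‖ * ((‖R‖ * ‖K‖) * ‖W * (b * S)‖) := by
          exact add_le_add e1 e2
      _ ≤ ‖a‖ * (2 * ‖W * (b * G1)‖) + ‖a‖ * ((2 * ‖K‖) * ‖W * (b * S)‖) := by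
          gcongr <;> exact hRnorm
      _ = 2 * ‖a‖ * (‖W * (b * G1)‖ + ‖K‖ * ‖W * (b * S)‖) := by ring
  calc μ⁻¹ * ‖Z‖ ≤ μ⁻¹ * (2 * ‖a‖ * (‖W * (b * G1)‖ + ‖K‖ * ‖W * (b * S)‖) + 1) := by
        gcongr
        linarith [hZnorm]
    _ = (2 * ‖a‖ * (‖W * (b * G1)‖ + ‖K‖ * ‖W * (b * S)‖) + 1) / μ := by
        rw [div_eq_mul_inv, mul_comm]
end
end

section
/- (Approximation property in the stiff limit.) Assume Q, A, Q̃_Δ and Ã are invertible. Then there exist constants c > 0 and μ* > 0 such that for all μ ≥ μ*, the matrices C(μ) and P̃(μ) are invertible and ‖ C(μ)^{-1} − T_C^F · P̃(μ)^{-1} · T_F^C ‖ ≤ c / μ. -/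
/-!
In the stiff limit the matrix `C(μ) = (I - E ⊗ H) - μ K` with `K = I_L ⊗ Q ⊗ A` invertible is
dominated by `-μ K`: writing it as `μ (-K + μ⁻¹ (I - E ⊗ H))`, a perturbation of size `O(1/μ)`
of the unit `-K`, shows that it is invertible with `‖C(μ)⁻¹‖ = O(1/μ)`. The coarse matrix `P̃(μ)`
has the same shape, so `‖P̃(μ)⁻¹‖ = O(1/μ)` as well, and the fixed transfer operators only
multiply that bound by `‖T_C^F‖ ‖T_F^C‖`.
-/

noncomputable section

open Matrix
open scoped Kronecker

open Filter Asymptotics Topology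
open scoped Matrix.Norms.L2Operator

theorem Ring.isUnit_smul_and_inverse_smul {𝕜 R : Type*} [Field 𝕜] [Ring R] [Algebra 𝕜 R]
    {c : 𝕜} (hc : c ≠ 0) {x : R} (hx : IsUnit x) :
    IsUnit (c • x) ∧ Ring.inverse (c • x) = c⁻¹ • Ring.inverse x := by
  obtain ⟨u, rfl⟩ := hx
  have hcu : c • (u : R) = ((Units.mk0 c hc • u : Rˣ) : R) := rfl
  rw [hcu, Ring.inverse_unit, Ring.inverse_unit]
  exact ⟨Units.isUnit _, by simp [Units.smul_def]⟩

theorem eventually_isUnit_and_isBigO_inverse_sub_smul {𝕜 R : Type*} [RCLike 𝕜] [NormedRing R]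
    [NormedAlgebra 𝕜 R] [CompleteSpace R] (b : R) (k : Rˣ) :
    (∀ᶠ μ : ℝ in atTop, IsUnit (b - (μ : 𝕜) • (k : R))) ∧
      (fun μ : ℝ => Ring.inverse (b - (μ : 𝕜) • (k : R))) =O[atTop] fun μ => μ⁻¹ := by
  have hfactor : ∀ᶠ μ : ℝ in atTop,
      b - (μ : 𝕜) • (k : R) = (μ : 𝕜) • ((↑(-k) : R) + (μ : 𝕜)⁻¹ • b) := by
    filter_upwards [eventually_ne_atTop 0] with μ hμ
    rw [smul_add, smul_smul, mul_inv_cancel₀ (by exact_mod_cast hμ), one_smul, Units.val_neg,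
      smul_neg, neg_add_eq_sub]
  have hsmall : Tendsto (fun μ : ℝ => (μ : 𝕜)⁻¹ • b) atTop (𝓝 0) := by
    have h : Tendsto (fun μ : ℝ => ((μ⁻¹ : ℝ) : 𝕜)) atTop (𝓝 0) := by
      simpa only [Function.comp_def, RCLike.ofReal_zero] using
        ((RCLike.continuous_ofReal (K := 𝕜)).tendsto 0).comp tendsto_inv_atTop_zero
    simpa only [RCLike.ofReal_inv, zero_smul] using h.smul_const b
  have hunit : ∀ᶠ μ : ℝ in atTop, IsUnit ((↑(-k) : R) + (μ : 𝕜)⁻¹ • b) := by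
    have h : Tendsto (fun μ : ℝ => (↑(-k) : R) + (μ : 𝕜)⁻¹ • b) atTop (𝓝 ↑(-k)) := by
      simpa using hsmall.const_add (↑(-k) : R)
    exact h.eventually (Units.isOpen.mem_nhds (-k).isUnit)
  have hbounded : (fun μ : ℝ => Ring.inverse ((↑(-k) : R) + (μ : 𝕜)⁻¹ • b)) =O[atTop]
      fun _ => (1 : ℝ) :=
    (NormedRing.inverse_add_norm (-k)).comp_tendsto hsmall
  have hscale : (fun μ : ℝ => (μ : 𝕜)⁻¹) =O[atTop] fun μ => μ⁻¹ :=
    isBigO_of_le _ fun μ => by simp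
  have hsmul : ∀ᶠ μ : ℝ in atTop, IsUnit (b - (μ : 𝕜) • (k : R)) ∧
      Ring.inverse (b - (μ : 𝕜) • (k : R)) =
        (μ : 𝕜)⁻¹ • Ring.inverse ((↑(-k) : R) + (μ : 𝕜)⁻¹ • b) := by
    filter_upwards [hfactor, hunit, eventually_ne_atTop 0] with μ hμ hu h0
    rw [hμ]
    exact Ring.isUnit_smul_and_inverse_smul (by exact_mod_cast h0) hu
  refine ⟨hsmul.mono fun _ h => h.1, ?_⟩
  refine EventuallyEq.trans_isBigO (hsmul.mono fun _ h => h.2) ?_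
  simpa using hscale.smul hbounded

theorem Matrix.isUnit_kronecker {R m n : Type*} [CommRing R] [Fintype m] [Fintype n]
    [DecidableEq m] [DecidableEq n] {A : Matrix m m R} {B : Matrix n n R} (hA : IsUnit A)
    (hB : IsUnit B) : IsUnit (A ⊗ₖ B) := by
  rw [isUnit_iff_isUnit_det, det_kronecker]
  exact ((isUnit_iff_isUnit_det A).1 hA |>.pow _).mul ((isUnit_iff_isUnit_det B).1 hB |>.pow _)

theorem Matrix.isBigO_mul_mul {α 𝕜 m n n' p : Type*} [RCLike 𝕜] [Fintype m] [Fintype n]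
    [Fintype n'] [Fintype p] [DecidableEq n] [DecidableEq n'] [DecidableEq p] {l : Filter α}
    (S : Matrix m n 𝕜) (Y : α → Matrix n n' 𝕜) (T : Matrix n' p 𝕜) :
    (fun x => S * Y x * T) =O[l] Y :=
  IsBigO.of_bound (‖S‖ * ‖T‖) <| Eventually.of_forall fun x =>
    calc ‖S * Y x * T‖ ≤ ‖S‖ * ‖Y x‖ * ‖T‖ :=
          (l2_opNorm_mul _ _).trans (by gcongr; exact l2_opNorm_mul _ _)
      _ = ‖S‖ * ‖T‖ * ‖Y x‖ := by ring

theorem isUnit_cmplx {n : Type*} [Fintype n] [DecidableEq n] {Q : Matrix n n ℝ}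
    (hQ : IsUnit Q) : IsUnit (cmplx Q) :=
  hQ.map (RingHom.mapMatrix Complex.ofRealHom)

theorem eventually_isUnit_Cmat_and_isBigO_inv (L : ℕ) {M N : ℕ} {Q : Matrix (Fin M) (Fin M) ℝ}
    {A : Matrix (Fin N) (Fin N) ℂ} (hQ : IsUnit Q) (hA : IsUnit A) :
    (∀ᶠ μ : ℝ in atTop, IsUnit (Cmat L Q A μ)) ∧
      (fun μ : ℝ => (Cmat L Q A μ)⁻¹) =O[atTop] fun μ => μ⁻¹ := by
  have hK : IsUnit ((1 : Matrix (Fin L) (Fin L) ℂ) ⊗ₖ (cmplx Q ⊗ₖ A)) :=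
    isUnit_one.kronecker ((isUnit_cmplx hQ).kronecker hA)
  have hC : ∀ μ : ℝ, Cmat L Q A μ = (1 - EH L M N) - (μ : ℂ) • (hK.unit : Matrix _ _ ℂ) :=
    fun μ => by rw [IsUnit.unit_spec, Cmat, sub_right_comm]
  simp only [hC, nonsing_inv_eq_ringInverse]
  exact eventually_isUnit_and_isBigO_inverse_sub_smul (1 - EH L M N) hK.unit

theorem Ptilde_eq_Cmat (L : ℕ) {M N : ℕ} (Q : Matrix (Fin M) (Fin M) ℝ)
    (A : Matrix (Fin N) (Fin N) ℂ) (μ : ℝ) : Ptilde L Q A μ = Cmat L Q A μ :=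
  rfl

theorem stmt_14_general (L M N M' N' : ℕ)
    (Q : Matrix (Fin M) (Fin M) ℝ) (A : Matrix (Fin N) (Fin N) ℂ)
    (QΔt : Matrix (Fin M') (Fin M') ℝ) (At : Matrix (Fin N') (Fin N') ℂ)
    (TFQ : Matrix (Fin M') (Fin M) ℝ) (TFA : Matrix (Fin N') (Fin N) ℂ)
    (TCQ : Matrix (Fin M) (Fin M') ℝ) (TCA : Matrix (Fin N) (Fin N') ℂ)
    (hQ : IsUnit Q) (hA : IsUnit A) (hQΔt : IsUnit QΔt) (hAt : IsUnit At) :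
    ∃ c > (0 : ℝ), ∃ μs > (0 : ℝ), ∀ μ : ℝ, μs ≤ μ →
      IsUnit (Cmat L Q A μ) ∧ IsUnit (Ptilde L QΔt At μ) ∧
      opNorm ((Cmat L Q A μ)⁻¹ -
          TCFmat L TCQ TCA * (Ptilde L QΔt At μ)⁻¹ * TFCmat L TFQ TFA) ≤ c / μ := by
  simp only [Ptilde_eq_Cmat]
  obtain ⟨hC, hCinv⟩ := eventually_isUnit_Cmat_and_isBigO_inv L hQ hA
  obtain ⟨hP, hPinv⟩ := eventually_isUnit_Cmat_and_isBigO_inv L hQΔt hAt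
  obtain ⟨c, hc, hbound⟩ :=
    (hCinv.sub ((isBigO_mul_mul (TCFmat L TCQ TCA) _ (TFCmat L TFQ TFA)).trans hPinv)).exists_pos
  obtain ⟨μs, hμs⟩ :=
    eventually_atTop.1 (hC.and (hP.and (hbound.bound.and (eventually_gt_atTop 0))))
  refine ⟨c, hc, max μs 1, by positivity, fun μ hμ => ?_⟩
  obtain ⟨hCμ, hPμ, hnorm, hμ0⟩ := hμs μ (le_of_max_le_left hμ)
  refine ⟨hCμ, hPμ, ?_⟩
  rw [opNorm, ← cstar_norm_def]
  simpa [div_eq_mul_inv, abs_of_pos hμ0] using hnorm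

theorem stmt_14 (L M N M' N' : ℕ) (hL : 0 < L) (hM : 0 < M) (hN : 0 < N)
    (hM' : 0 < M') (hN' : 0 < N')
    (Q : Matrix (Fin M) (Fin M) ℝ) (A : Matrix (Fin N) (Fin N) ℂ)
    (QΔt : Matrix (Fin M') (Fin M') ℝ) (At : Matrix (Fin N') (Fin N') ℂ)
    (TFQ : Matrix (Fin M') (Fin M) ℝ) (TFA : Matrix (Fin N') (Fin N) ℂ)
    (TCQ : Matrix (Fin M) (Fin M') ℝ) (TCA : Matrix (Fin N) (Fin N') ℂ)
    (hQ : IsUnit Q) (hA : IsUnit A) (hQΔt : IsUnit QΔt) (hAt : IsUnit At) :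
    ∃ c > (0 : ℝ), ∃ μs > (0 : ℝ), ∀ μ : ℝ, μs ≤ μ →
      IsUnit (Cmat L Q A μ) ∧ IsUnit (Ptilde L QΔt At μ) ∧
      opNorm ((Cmat L Q A μ)⁻¹ -
          TCFmat L TCQ TCA * (Ptilde L QΔt At μ)⁻¹ * TFCmat L TFQ TFA) ≤ c / μ :=
  stmt_14_general L M N M' N' Q A QΔt At TFQ TFA TCQ TCA hQ hA hQΔt hAt
end
end
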